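/- Let d, L ≥ 1, and let A₁, A₂, A₃, Y ∈ ℝ^{d×L} and W, W_{OV} ∈ ℝ^{d×d}. With 𝔸 := A₁ᵀ ⊗ A₂ᵀ ∈ ℝ^{L²×d²}, define f(W) ∈ ℝ^{L×L} whose j₀-th row is f(W)_{j₀}ᵀ where f(W)_{j₀} := exp(𝔸_{j₀} vec(W)) / ⟨exp(𝔸_{j₀} vec(W)), 1_L⟩; h(W_{OV}) ∈ ℝ^{L×d} whose i₀-th column is A₃ᵀ(W_{OV}ᵀ)_{*,i₀}; c(W) := f(W) h(W_{OV}) − Yᵀ ∈ ℝ^{L×d}; q(W) := c(W) h(W_{OV})ᵀ ∈ ℝ^{L×L} with rows q(W)_{j₀}ᵀ; and p(W) ∈ ℝ^{L×L} whose j₀-th row is p(W)_{j₀}ᵀ with p(W)_{j₀} := (diag(f(W)_{j₀}) − f(W)_{j₀} f(W)_{j₀}ᵀ) q(W)_{j₀}. Then the gradient with respect to vec(W) of G(W) := (1/2) Σ_{j₀=1}^{L} Σ_{i₀=1}^{d} c(W)_{j₀,i₀}² equals vec(A₁ p(W) A₂ᵀ). -/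

import Mathlib

/-!
Along `e_p` the logits of row `j₀` move with velocity
`b_{j₀} = 𝔸_{j₀} e_p = A₁[p.1, j₀] • A₂[p.2, ·]`, so the softmax row `f_{j₀}` moves with velocity
`J(f_{j₀}) b_{j₀}`, where `J(s) = diag s - s sᵀ`. The chain rule gives
`∂_p G = Σ_{j₀} ⟨c_{j₀}, (J b_{j₀})ᵀ h⟩ = Σ_{j₀} ⟨J b_{j₀}, q_{j₀}⟩`, and since `J` is symmetric this
is `Σ_{j₀} ⟨b_{j₀}, J q_{j₀}⟩ = Σ_{j₀} ⟨b_{j₀}, p_{j₀}⟩ = (A₁ p A₂ᵀ)_{p.1, p.2}`.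
-/

open Matrix BigOperators

namespace DiTGradMat

variable {d L : ℕ}

/-- The `j₀`-th block of `L` consecutive rows of `𝔸 = A₁ᵀ ⊗ A₂ᵀ`. -/
noncomputable def Ablock (A₁ A₂ : Matrix (Fin d) (Fin L) ℝ) (j₀ : Fin L) :
    Matrix (Fin L) (Fin d × Fin d) ℝ :=
  Matrix.of fun j p => Matrix.kroneckerMap (· * ·) A₁ᵀ A₂ᵀ (j₀, j) p

/-- `f(W)_{j₀} = exp(𝔸_{j₀} vec(W)) / ⟨exp(𝔸_{j₀} vec(W)), 1_L⟩`. -/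
noncomputable def fVec (A₁ A₂ : Matrix (Fin d) (Fin L) ℝ) (j₀ : Fin L)
    (w : Fin d × Fin d → ℝ) : Fin L → ℝ :=
  fun j => Real.exp ((Ablock A₁ A₂ j₀).mulVec w j)
    / ∑ j', Real.exp ((Ablock A₁ A₂ j₀).mulVec w j')

/-- `h(W_{OV}) ∈ ℝ^{L×d}`, whose `i₀`-th column is `A₃ᵀ (W_{OV}ᵀ)_{*,i₀}`. -/
noncomputable def hMat (A₃ : Matrix (Fin d) (Fin L) ℝ) (WOV : Matrix (Fin d) (Fin d) ℝ) :
    Matrix (Fin L) (Fin d) ℝ :=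
  Matrix.of fun j i₀ => ∑ i, A₃ i j * WOV i₀ i

/-- `c(W) = f(W) h(W_{OV}) − Yᵀ ∈ ℝ^{L×d}`. -/
noncomputable def cMat (A₁ A₂ A₃ Y : Matrix (Fin d) (Fin L) ℝ)
    (WOV : Matrix (Fin d) (Fin d) ℝ) (w : Fin d × Fin d → ℝ) :
    Matrix (Fin L) (Fin d) ℝ :=
  Matrix.of fun j₀ i₀ => (∑ j, fVec A₁ A₂ j₀ w j * hMat A₃ WOV j i₀) - Yᵀ j₀ i₀

/-- `q(W) = c(W) h(W_{OV})ᵀ ∈ ℝ^{L×L}`. -/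
noncomputable def qMat (A₁ A₂ A₃ Y : Matrix (Fin d) (Fin L) ℝ)
    (WOV : Matrix (Fin d) (Fin d) ℝ) (w : Fin d × Fin d → ℝ) :
    Matrix (Fin L) (Fin L) ℝ :=
  cMat A₁ A₂ A₃ Y WOV w * (hMat A₃ WOV)ᵀ

/-- `p(W) ∈ ℝ^{L×L}`, whose `j₀`-th row is
`((diag(f(W)_{j₀}) − f(W)_{j₀} f(W)_{j₀}ᵀ) q(W)_{j₀})ᵀ`. -/
noncomputable def pMat (A₁ A₂ A₃ Y : Matrix (Fin d) (Fin L) ℝ)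
    (WOV : Matrix (Fin d) (Fin d) ℝ) (w : Fin d × Fin d → ℝ) :
    Matrix (Fin L) (Fin L) ℝ :=
  Matrix.of fun j₀ j =>
    fVec A₁ A₂ j₀ w j * qMat A₁ A₂ A₃ Y WOV w j₀ j
      - fVec A₁ A₂ j₀ w j * ∑ j', fVec A₁ A₂ j₀ w j' * qMat A₁ A₂ A₃ Y WOV w j₀ j'

/-- The DiT loss `G(W) = (1/2) Σ_{j₀,i₀} c(W)_{j₀,i₀}²` as a function of `vec(W)`. -/
noncomputable def lossG (A₁ A₂ A₃ Y : Matrix (Fin d) (Fin L) ℝ)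
    (WOV : Matrix (Fin d) (Fin d) ℝ) (w : Fin d × Fin d → ℝ) : ℝ :=
  (1 / 2) * ∑ j₀, ∑ i₀, (cMat A₁ A₂ A₃ Y WOV w j₀ i₀) ^ 2

theorem mul_mul_transpose_apply {m n R : Type*} [Fintype n] [CommSemiring R]
    (A B : Matrix m n R) (P : Matrix n n R) (i j : m) :
    (A * P * Bᵀ) i j = ∑ k, (A i k • B j) ⬝ᵥ P k := by
  simp only [mul_apply, transpose_apply, Finset.sum_mul, dotProduct, Pi.smul_apply, smul_eq_mul]
  rw [Finset.sum_comm]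
  exact Finset.sum_congr rfl fun _ _ => Finset.sum_congr rfl fun _ _ => by ring

section Softmax

variable {ι : Type*}

def softmaxJacobian [DecidableEq ι] (s : ι → ℝ) : Matrix ι ι ℝ :=
  diagonal s - vecMulVec s s

theorem softmaxJacobian_transpose [DecidableEq ι] (s : ι → ℝ) :
    (softmaxJacobian s)ᵀ = softmaxJacobian s := by
  simp [softmaxJacobian, transpose_vecMulVec]

variable [Fintype ι]

theorem softmaxJacobian_mulVec_dotProduct [DecidableEq ι] (s b q : ι → ℝ) :
    (softmaxJacobian s *ᵥ b) ⬝ᵥ q = b ⬝ᵥ (softmaxJacobian s *ᵥ q) := by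
  rw [dotProduct_comm, dotProduct_mulVec, ← vecMul_transpose, softmaxJacobian_transpose,
    dotProduct_comm]

theorem softmaxJacobian_mulVec_apply [DecidableEq ι] (s v : ι → ℝ) (j : ι) :
    (softmaxJacobian s *ᵥ v) j = s j * v j - s j * ∑ k, s k * v k := by
  simp [softmaxJacobian, sub_mulVec, mulVec_diagonal, vecMulVec_mulVec, dotProduct, mul_comm]

noncomputable def softmax (x : ι → ℝ) : ι → ℝ :=
  fun j => Real.exp (x j) / ∑ k, Real.exp (x k)

theorem sum_exp_ne_zero [Nonempty ι] (x : ι → ℝ) : ∑ k, Real.exp (x k) ≠ 0 :=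
  (Finset.sum_pos (fun _ _ => Real.exp_pos _) Finset.univ_nonempty).ne'

theorem differentiable_softmax [Nonempty ι] : Differentiable ℝ (softmax : (ι → ℝ) → ι → ℝ) := by
  refine differentiable_pi.mpr fun j => ?_
  simp only [softmax, div_eq_mul_inv]
  fun_prop (disch := exact sum_exp_ne_zero)

theorem hasLineDerivAt_softmax [DecidableEq ι] [Nonempty ι] (x v : ι → ℝ) :
    HasLineDerivAt ℝ softmax (softmaxJacobian (softmax x) *ᵥ v) x v := by
  rw [HasLineDerivAt, hasDerivAt_pi]
  intro j
  have hexp : ∀ k,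
      HasDerivAt (fun t : ℝ => Real.exp (x k + t * v k)) (Real.exp (x k) * v k) 0 := fun k => by
    simpa using (((hasDerivAt_id (0:ℝ)).mul_const (v k)).const_add (x k)).exp
  have hline : (fun t : ℝ => softmax (x + t • v) j)
      = fun t => Real.exp (x j + t * v j) / ∑ k, Real.exp (x k + t * v k) := by
    simp [softmax]
  rw [hline]
  refine ((hexp j).fun_div (HasDerivAt.fun_sum fun k _ => hexp k) ?_).congr_deriv ?_
  · simpa using sum_exp_ne_zero x
  · simp only [softmaxJacobian_mulVec_apply, softmax, zero_mul, add_zero, div_mul_eq_mul_div,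
      ← Finset.sum_div]
    field_simp

end Softmax

section DiT

variable (A₁ A₂ A₃ Y : Matrix (Fin d) (Fin L) ℝ) (WOV : Matrix (Fin d) (Fin d) ℝ)
  (w v : Fin d × Fin d → ℝ)

theorem fVec_eq_softmax (j₀ : Fin L) : fVec A₁ A₂ j₀ w = softmax (Ablock A₁ A₂ j₀ *ᵥ w) := rfl

theorem Ablock_mulVec_single (j₀ : Fin L) (p : Fin d × Fin d) :
    Ablock A₁ A₂ j₀ *ᵥ Pi.single p 1 = A₁ p.1 j₀ • A₂ p.2 := by
  ext j
  simp [mulVec_single, Ablock, kroneckerMap]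

theorem pMat_row (j₀ : Fin L) :
    pMat A₁ A₂ A₃ Y WOV w j₀ = softmaxJacobian (fVec A₁ A₂ j₀ w) *ᵥ qMat A₁ A₂ A₃ Y WOV w j₀ := by
  ext j
  simp [pMat, softmaxJacobian_mulVec_apply]

theorem qMat_row (j₀ : Fin L) :
    qMat A₁ A₂ A₃ Y WOV w j₀ = hMat A₃ WOV *ᵥ cMat A₁ A₂ A₃ Y WOV w j₀ := by
  ext j
  simp [qMat, mul_apply, mulVec, dotProduct, mul_comm]

theorem cMat_dotProduct_vecMul_hMat (j₀ : Fin L) (b : Fin L → ℝ) :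
    cMat A₁ A₂ A₃ Y WOV w j₀ ⬝ᵥ ((softmaxJacobian (fVec A₁ A₂ j₀ w) *ᵥ b) ᵥ* hMat A₃ WOV)
      = b ⬝ᵥ pMat A₁ A₂ A₃ Y WOV w j₀ := by
  rw [dotProduct_comm, ← dotProduct_mulVec, ← qMat_row, softmaxJacobian_mulVec_dotProduct,
    pMat_row]

variable [Nonempty (Fin L)]

theorem differentiable_lossG : Differentiable ℝ (lossG A₁ A₂ A₃ Y WOV) := by
  have hf : ∀ j₀ j, Differentiable ℝ fun w => fVec A₁ A₂ j₀ w j := fun j₀ j =>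
    differentiable_pi.mp (differentiable_softmax.comp
      (LinearMap.toContinuousLinearMap (Ablock A₁ A₂ j₀).mulVecLin).differentiable) j
  unfold lossG cMat
  simp only [of_apply]
  fun_prop

theorem hasLineDerivAt_fVec (j₀ : Fin L) :
    HasLineDerivAt ℝ (fVec A₁ A₂ j₀)
      (softmaxJacobian (fVec A₁ A₂ j₀ w) *ᵥ (Ablock A₁ A₂ j₀ *ᵥ v)) w v := by
  have h := hasLineDerivAt_softmax (Ablock A₁ A₂ j₀ *ᵥ w) (Ablock A₁ A₂ j₀ *ᵥ v)
  unfold HasLineDerivAt at h ⊢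
  simpa only [fVec_eq_softmax, mulVec_add, mulVec_smul] using h

theorem hasLineDerivAt_cMat_apply (j₀ : Fin L) (i₀ : Fin d) :
    HasLineDerivAt ℝ (fun w => cMat A₁ A₂ A₃ Y WOV w j₀ i₀)
      (((softmaxJacobian (fVec A₁ A₂ j₀ w) *ᵥ (Ablock A₁ A₂ j₀ *ᵥ v)) ᵥ* hMat A₃ WOV) i₀) w v :=
  have hf := hasDerivAt_pi.mp (hasLineDerivAt_fVec A₁ A₂ w v j₀)
  (HasDerivAt.fun_sum fun j _ => (hf j).mul_const (hMat A₃ WOV j i₀)).sub_const (Yᵀ j₀ i₀)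

theorem hasLineDerivAt_lossG :
    HasLineDerivAt ℝ (lossG A₁ A₂ A₃ Y WOV)
      (∑ j₀, cMat A₁ A₂ A₃ Y WOV w j₀ ⬝ᵥ
        ((softmaxJacobian (fVec A₁ A₂ j₀ w) *ᵥ (Ablock A₁ A₂ j₀ *ᵥ v)) ᵥ* hMat A₃ WOV)) w v := by
  have h := (HasDerivAt.fun_sum (u := .univ) fun j₀ _ =>
    HasDerivAt.fun_sum (u := .univ) fun i₀ _ =>
      (hasLineDerivAt_cMat_apply A₁ A₂ A₃ Y WOV w v j₀ i₀).pow 2).const_mul (1 / 2 : ℝ)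
  refine h.congr_deriv ?_
  simp only [zero_smul, add_zero, dotProduct, Finset.mul_sum]
  refine Finset.sum_congr rfl fun _ _ => Finset.sum_congr rfl fun _ _ => ?_
  push_cast
  ring

end DiT

theorem dit_gradient_matrix_form_general
    (d L : ℕ) (hL : 1 ≤ L)
    (A₁ A₂ A₃ Y : Matrix (Fin d) (Fin L) ℝ) (W WOV : Matrix (Fin d) (Fin d) ℝ)
    (p : Fin d × Fin d) :
    fderiv ℝ (lossG A₁ A₂ A₃ Y WOV) (fun q : Fin d × Fin d => W q.1 q.2) (Pi.single p 1)
      = (A₁ * pMat A₁ A₂ A₃ Y WOV (fun q => W q.1 q.2) * A₂ᵀ) p.1 p.2 := by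
  have : Nonempty (Fin L) := Fin.pos_iff_nonempty.mp hL
  rw [← (differentiable_lossG A₁ A₂ A₃ Y WOV _).lineDeriv_eq_fderiv,
    (hasLineDerivAt_lossG A₁ A₂ A₃ Y WOV _ _).lineDeriv, mul_mul_transpose_apply]
  simp only [cMat_dotProduct_vecMul_hMat, Ablock_mulVec_single]

/-- The DiT training gradient equals `vec(A₁ p(W) A₂ᵀ)`, stated componentwise: the partial
derivative of `G` at `vec(W)` in coordinate `p` equals `(A₁ p(W) A₂ᵀ)_{p.1, p.2}`. -/
theorem dit_gradient_matrix_form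
    (d L : ℕ) (hd : 1 ≤ d) (hL : 1 ≤ L)
    (A₁ A₂ A₃ Y : Matrix (Fin d) (Fin L) ℝ) (W WOV : Matrix (Fin d) (Fin d) ℝ)
    (p : Fin d × Fin d) :
    fderiv ℝ (lossG A₁ A₂ A₃ Y WOV) (fun q : Fin d × Fin d => W q.1 q.2) (Pi.single p 1)
      = (A₁ * pMat A₁ A₂ A₃ Y WOV (fun q => W q.1 q.2) * A₂ᵀ) p.1 p.2 :=
  dit_gradient_matrix_form_general d L hL A₁ A₂ A₃ Y W WOV p

end DiTGradMat
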